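/- arXiv:1006.5876 — 2 statements merged into one kernel-verified Lean document; each statement's English description precedes it below -/
import Mathlib

section
/- If the trigonometric polynomial p(θ) = p₀ + Σ_{k=1}^n 2p_k cos(kθ) is strictly positive for all θ, then there exists m₀ such that for all m ≥ m₀ the weighted Toeplitz matrix P_m is positive definite. -/
/-!
`P_m` is the banded Toeplitz matrix of the trigonometric polynomial with coefficients
`m p_d / (m - d)`. These coefficients tend to `p_d`, so the polynomials converge to `p` uniformly
and are eventually bounded below by `min p / 2 > 0`.

A banded Toeplitz matrix `T` is bounded below by the minimum `c` of its symbol `q`: for `N ≥ m + n`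
the discrete Fourier transform `X` of `x` over `ZMod N` satisfies
`N · xᵀ T x = ∑ₐ q(2πa/N) |X a|² ≥ c ∑ₐ |X a|² = c N |x|²`,
by orthogonality of the characters of `ZMod N` (the bandwidth `n` keeps the frequencies from
wrapping around).
-/

open Matrix Real Finset

/-- The trigonometric polynomial `p(θ) = p₀ + Σ_{k=1}^n 2 p_k cos(kθ)`. -/
noncomputable def trigPoly (n : ℕ) (p : ℕ → ℝ) (θ : ℝ) : ℝ :=
  p 0 + ∑ k ∈ Finset.Icc 1 n, 2 * p k * Real.cos (k * θ)

/-- The `m × m` weighted symmetric banded Toeplitz matrix with `(j,k)` entry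
`(m/(m-|j-k|)) p_{|j-k|}` for `|j-k| ≤ n`, else `0`. -/
noncomputable def Pmat (n m : ℕ) (p : ℕ → ℝ) : Matrix (Fin m) (Fin m) ℝ :=
  fun j k =>
    if ((j : ℤ) - (k : ℤ)).natAbs ≤ n then
      ((m : ℝ) / ((m : ℝ) - (((j : ℤ) - (k : ℤ)).natAbs : ℝ))) * p ((( j : ℤ) - (k : ℤ)).natAbs)
    else 0

open Filter Topology

section trigPoly

variable (n : ℕ) (p q : ℕ → ℝ)

theorem trigPoly_sub (θ : ℝ) : trigPoly n p θ - trigPoly n q θ = trigPoly n (p - q) θ := by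
  simp only [trigPoly, Pi.sub_apply, sub_mul, mul_sub, Finset.sum_sub_distrib]
  ring

theorem abs_trigPoly_le (θ : ℝ) :
    |trigPoly n p θ| ≤ |p 0| + ∑ k ∈ Icc 1 n, 2 * |p k| := by
  refine (abs_add_le _ _).trans (add_le_add le_rfl ((abs_sum_le_sum_abs _ _).trans ?_))
  refine Finset.sum_le_sum fun k _ => ?_
  rw [abs_mul, abs_mul, abs_two]
  exact mul_le_of_le_one_right (by positivity) (abs_cos_le_one _)

theorem continuous_trigPoly : Continuous (trigPoly n p) := by
  unfold trigPoly
  fun_prop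

theorem periodic_trigPoly : Function.Periodic (trigPoly n p) (2 * π) := by
  intro θ
  simp only [trigPoly]
  congr 1
  refine Finset.sum_congr rfl fun k _ => ?_
  rw [mul_add, cos_add_nat_mul_two_pi]

theorem exists_pos_le_trigPoly (hpos : ∀ θ, 0 < trigPoly n p θ) :
    ∃ c > 0, ∀ θ, c ≤ trigPoly n p θ := by
  obtain ⟨c, ⟨θ₀, rfl⟩, hc⟩ := ((periodic_trigPoly n p).compact_of_continuous two_pi_pos.ne'
    (continuous_trigPoly n p)).exists_isLeast (Set.range_nonempty _)
  exact ⟨_, hpos θ₀, fun θ => hc ⟨θ, rfl⟩⟩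

theorem ofReal_trigPoly_eq_sum_exp (θ : ℝ) :
    (trigPoly n p θ : ℂ) =
      ∑ t ∈ Icc (-n : ℤ) n, (p t.natAbs : ℂ) * Complex.exp (t * θ * Complex.I) := by
  induction n with
  | zero => simp [trigPoly]
  | succ n ih =>
    have hIcc : Icc (-(n + 1 : ℕ) : ℤ) (n + 1 : ℕ) =
        insert (-(n + 1 : ℕ) : ℤ) (insert ((n + 1 : ℕ) : ℤ) (Icc (-n : ℤ) n)) := by
      ext t; simp only [mem_Icc, mem_insert]; omega
    rw [hIcc, sum_insert (by simp only [mem_insert, mem_Icc]; omega), sum_insert (by simp), ← ih,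
      trigPoly, trigPoly, sum_Icc_succ_top (by omega), Int.natAbs_neg, Int.natAbs_natCast]
    push_cast
    have h := Complex.two_cos ((n + 1) * θ)
    simp only [neg_mul] at h ⊢
    linear_combination (p (n + 1) : ℂ) * h

end trigPoly

theorem eventually_le_trigPoly_of_tendsto {ι : Type*} {l : Filter ι} {n : ℕ} {p : ℕ → ℝ}
    {q : ι → ℕ → ℝ} (hq : ∀ k, Tendsto (fun i => q i k) l (𝓝 (p k))) {c c' : ℝ}
    (hc : ∀ θ, c ≤ trigPoly n p θ) (hc' : c' < c) :
    ∀ᶠ i in l, ∀ θ, c' ≤ trigPoly n (q i) θ := by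
  have hdiff : ∀ k, Tendsto (fun i => |(p - q i) k|) l (𝓝 0) := fun k => by
    simpa using ((tendsto_const_nhds (x := p k)).sub (hq k)).abs
  have herr : Tendsto (fun i => |(p - q i) 0| + ∑ k ∈ Icc 1 n, 2 * |(p - q i) k|) l (𝓝 0) := by
    simpa using (hdiff 0).add (tendsto_finsetSum _ fun k _ => (hdiff k).const_mul 2)
  filter_upwards [herr.eventually (gt_mem_nhds (sub_pos.mpr hc'))] with i hi θ
  have := (le_abs_self _).trans (abs_trigPoly_le n (p - q i) θ)
  rw [← trigPoly_sub] at this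
  linarith [hc θ]

noncomputable def bandedToeplitz (n m : ℕ) (q : ℕ → ℝ) : Matrix (Fin m) (Fin m) ℝ :=
  Matrix.of fun j k => if ((j : ℤ) - k).natAbs ≤ n then q ((j : ℤ) - k).natAbs else 0

theorem Pmat_eq_bandedToeplitz (n m : ℕ) (p : ℕ → ℝ) :
    Pmat n m p = bandedToeplitz n m (fun d => m / (m - d) * p d) := rfl

theorem bandedToeplitz_isHermitian (n m : ℕ) (q : ℕ → ℝ) :
    (bandedToeplitz n m q).IsHermitian := by
  ext j k
  simp only [conjTranspose_apply, star_trivial, bandedToeplitz, of_apply]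
  rw [← Int.natAbs_neg, neg_sub]

section finiteFourier

open ZMod

variable {N m : ℕ} [NeZero N]

noncomputable def finiteFourier (x : Fin m → ℝ) (a : ZMod N) : ℂ :=
  ∑ j, (x j : ℂ) * stdAddChar (((j : ℕ) : ZMod N) * a)

theorem conj_stdAddChar (a : ZMod N) :
    (starRingEnd ℂ) (stdAddChar a) = stdAddChar (-a) := by
  rw [stdAddChar_apply, stdAddChar_apply, ← Circle.coe_inv_eq_conj, AddChar.map_neg_eq_inv]

theorem sum_stdAddChar_intCast_mul {d : ℤ} (hd : |d| < N) :
    ∑ a : ZMod N, stdAddChar ((d : ZMod N) * a) = if d = 0 then (N : ℂ) else 0 := by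
  simp_rw [mul_comm (d : ZMod N)]
  rw [AddChar.sum_mulShift _ (isPrimitive_stdAddChar N), ZMod.card, Nat.cast_ite, Nat.cast_zero]
  refine if_congr ?_ rfl rfl
  rw [ZMod.intCast_zmod_eq_zero_iff_dvd]
  exact ⟨fun h => Int.eq_zero_of_abs_lt_dvd h hd, fun h => h ▸ dvd_zero _⟩

theorem ofReal_normSq_finiteFourier (x : Fin m → ℝ) (a : ZMod N) :
    (Complex.normSq (finiteFourier x a) : ℂ) =
      ∑ j, ∑ k, (x j * x k : ℂ) * stdAddChar (((j - k : ℤ) : ZMod N) * a) := by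
  rw [← Complex.mul_conj, finiteFourier, map_sum, sum_mul_sum]
  refine sum_congr rfl fun j _ => sum_congr rfl fun k _ => ?_
  rw [(starRingEnd ℂ).map_mul, Complex.conj_ofReal, conj_stdAddChar]
  push_cast
  rw [sub_mul, sub_eq_add_neg, AddChar.map_add_eq_mul, ← neg_mul]
  ring

theorem sum_mul_normSq_finiteFourier (x : Fin m → ℝ) (s : Finset ℤ) (c : ℤ → ℂ)
    (hs : ∀ t ∈ s, |t| + m ≤ N) :
    ∑ a : ZMod N, (∑ t ∈ s, c t * stdAddChar ((t : ZMod N) * a)) *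
        Complex.normSq (finiteFourier x a) =
      N * ∑ j, ∑ k, (x j * x k : ℂ) * (if (k : ℤ) - j ∈ s then c (k - j) else 0) := by
  have horth : ∀ j k : Fin m, ∀ t ∈ s,
      ∑ a : ZMod N, stdAddChar (((t + (j - k) : ℤ) : ZMod N) * a) =
        if (k : ℤ) - j = t then (N : ℂ) else 0 := by
    intro j k t ht
    have := hs t ht
    have := le_abs_self t
    have := neg_abs_le t
    rw [sum_stdAddChar_intCast_mul (by rw [abs_lt]; omega)]
    exact if_congr (by omega) rfl rfl
  have hcoeff : ∀ j k : Fin m,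
      ∑ t ∈ s, c t * ∑ a : ZMod N, stdAddChar (((t + (j - k) : ℤ) : ZMod N) * a) =
        N * (if (k : ℤ) - j ∈ s then c (k - j) else 0) := by
    intro j k
    rw [sum_congr rfl fun t ht => by rw [horth j k t ht]]
    simp_rw [mul_ite, mul_zero, sum_ite_eq, mul_comm (N : ℂ)]
  calc _ = ∑ a : ZMod N, ∑ j, ∑ k, ∑ t ∈ s,
        (x j * x k : ℂ) * (c t * stdAddChar (((t + (j - k) : ℤ) : ZMod N) * a)) := by
        refine sum_congr rfl fun a _ => ?_
        simp_rw [ofReal_normSq_finiteFourier, mul_sum, sum_mul]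
        refine sum_congr rfl fun j _ => sum_congr rfl fun k _ => sum_congr rfl fun t _ => ?_
        push_cast
        rw [add_mul, AddChar.map_add_eq_mul]
        ring
    _ = ∑ j, ∑ k, (x j * x k : ℂ) *
        ∑ t ∈ s, c t * ∑ a : ZMod N, stdAddChar (((t + (j - k) : ℤ) : ZMod N) * a) := by
        rw [sum_comm]
        refine sum_congr rfl fun j _ => ?_
        rw [sum_comm]
        refine sum_congr rfl fun k _ => ?_
        rw [sum_comm]
        simp_rw [mul_sum]
    _ = _ := by
        simp_rw [hcoeff, mul_sum]
        refine sum_congr rfl fun j _ => sum_congr rfl fun k _ => ?_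
        ring

theorem ofReal_trigPoly_eq_sum_stdAddChar (n : ℕ) (p : ℕ → ℝ) (a : ZMod N) :
    (trigPoly n p (2 * π * a.val / N) : ℂ) =
      ∑ t ∈ Icc (-n : ℤ) n, (p t.natAbs : ℂ) * stdAddChar ((t : ZMod N) * a) := by
  rw [ofReal_trigPoly_eq_sum_exp]
  refine sum_congr rfl fun t _ => ?_
  have hcast : (t : ZMod N) * a = ((t * a.val : ℤ) : ZMod N) := by simp
  rw [hcast, stdAddChar_coe]
  push_cast
  ring_nf

theorem sum_trigPoly_mul_normSq_finiteFourier (n : ℕ) (p : ℕ → ℝ) (hN : m + n ≤ N)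
    (x : Fin m → ℝ) :
    ∑ a : ZMod N, trigPoly n p (2 * π * a.val / N) * Complex.normSq (finiteFourier x a) =
      N * (x ⬝ᵥ bandedToeplitz n m p *ᵥ x) := by
  apply Complex.ofReal_injective
  push_cast
  simp_rw [ofReal_trigPoly_eq_sum_stdAddChar]
  rw [sum_mul_normSq_finiteFourier x _ _ fun t ht => by
    have := abs_le.mpr (mem_Icc.mp ht); omega]
  congr 1
  simp only [dotProduct, mulVec, bandedToeplitz, of_apply, mul_sum, Complex.ofReal_sum]
  refine Finset.sum_congr rfl fun j _ => Finset.sum_congr rfl fun k _ => ?_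
  have hband : (k : ℤ) - j ∈ Icc (-n : ℤ) n ↔ ((j : ℤ) - k).natAbs ≤ n := by
    rw [mem_Icc]; omega
  rw [if_congr hband (by rw [← Int.natAbs_neg, neg_sub]) rfl]
  push_cast [apply_ite]
  split_ifs <;> ring

theorem sum_normSq_finiteFourier (hN : m ≤ N) (x : Fin m → ℝ) :
    ∑ a : ZMod N, Complex.normSq (finiteFourier x a) = N * (x ⬝ᵥ x) := by
  apply Complex.ofReal_injective
  have := sum_mul_normSq_finiteFourier (N := N) x {0} 1 (by simpa using hN)
  simp only [sum_singleton, Int.cast_zero, zero_mul, AddChar.map_zero_eq_one, Pi.one_apply,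
    one_mul, mem_singleton, sub_eq_zero] at this
  push_cast
  rw [this]
  simp [dotProduct, Fin.val_inj]

end finiteFourier

theorem le_dotProduct_bandedToeplitz_mulVec {n m : ℕ} {q : ℕ → ℝ} {c : ℝ}
    (hc : ∀ θ, c ≤ trigPoly n q θ) (x : Fin m → ℝ) :
    c * (x ⬝ᵥ x) ≤ x ⬝ᵥ bandedToeplitz n m q *ᵥ x := by
  set N := m + n + 1
  have hN : (0 : ℝ) < N := by positivity
  refine le_of_mul_le_mul_left ?_ hN
  calc N * (c * (x ⬝ᵥ x))
      = ∑ a : ZMod N, c * Complex.normSq (finiteFourier x a) := by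
        rw [← mul_sum, sum_normSq_finiteFourier (by omega)]; ring
    _ ≤ ∑ a : ZMod N, trigPoly n q (2 * π * a.val / N) * Complex.normSq (finiteFourier x a) :=
        sum_le_sum fun a _ => mul_le_mul_of_nonneg_right (hc _) (Complex.normSq_nonneg _)
    _ = N * (x ⬝ᵥ bandedToeplitz n m q *ᵥ x) :=
        sum_trigPoly_mul_normSq_finiteFourier n q (by omega) x

theorem posDef_bandedToeplitz {n m : ℕ} {q : ℕ → ℝ} {c : ℝ} (hc : 0 < c)
    (hcq : ∀ θ, c ≤ trigPoly n q θ) : (bandedToeplitz n m q).PosDef := by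
  refine posDef_iff_dotProduct_mulVec.mpr ⟨bandedToeplitz_isHermitian n m q, fun x hx => ?_⟩
  have hx' : 0 < x ⬝ᵥ x := by simpa using dotProduct_star_self_pos_iff.mpr hx
  rw [star_trivial]
  exact (mul_pos hc hx').trans_le (le_dotProduct_bandedToeplitz_mulVec hcq x)

/-- If `p` is strictly positive then `P_m` is positive definite for all large enough `m`. -/
theorem stmt5 (n : ℕ) (p : ℕ → ℝ) (hpos : ∀ θ : ℝ, 0 < trigPoly n p θ) :
    ∃ m₀ : ℕ, ∀ m : ℕ, m₀ ≤ m → (Pmat n m p).PosDef := by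
  obtain ⟨c, hc, hpc⟩ := exists_pos_le_trigPoly n p hpos
  have hweight : ∀ k, Tendsto (fun m : ℕ => (m : ℝ) / (m - k) * p k) atTop (𝓝 (p k)) :=
    fun k => by
      simpa [sub_eq_add_neg] using (tendsto_natCast_div_add_atTop (-(k : ℝ))).mul_const (p k)
  obtain ⟨m₀, hm₀⟩ := eventually_atTop.mp
    (eventually_le_trigPoly_of_tendsto hweight hpc (half_lt_self hc))
  refine ⟨m₀, fun m hm => ?_⟩
  rw [Pmat_eq_bandedToeplitz]
  exact posDef_bandedToeplitz (half_pos hc) (hm₀ m hm)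
end

section
/- Let d(z) = d₀ + d₁z + d₂z² + z³ be a monic real cubic. If the 4×4 matrix [[2, (4/3)d₂, 2d₁, 4d₀], [(4/3)d₂, 2, (4/3)d₂, 2d₁], [2d₁, (4/3)d₂, 2, (4/3)d₂], [4d₀, 2d₁, (4/3)d₂, 2]] is positive definite, then all three roots of d lie in the open unit disk. -/
/-!
Evaluating the quadratic form of the (Toeplitz) LMI matrix at the real and imaginary parts of
`(1, e^{iθ}, e^{2iθ}, e^{3iθ})` and adding gives `8 (1 + d₂ cos θ + d₁ cos 2θ + d₀ cos 3θ)`,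
which is therefore positive. This is the real part of the reversed polynomial
`g(w) = 1 + d₂ w + d₁ w² + d₀ w³` on the unit circle. Applying the maximum modulus principle to
`exp (-g)` shows that `re g > 0` on the whole closed unit disk, so `g` has no zero there; since
`g(1/z) = d(z) / z³`, every root `z` of `d` has `‖z‖ < 1`.
-/

open Matrix Complex

theorem Matrix.PosDef.sum_mul_cos_sub_pos {ι : Type*} [Fintype ι] [Nonempty ι]
    {A : Matrix ι ι ℝ} (hA : A.PosDef) (t : ι → ℝ) :
    0 < ∑ i, ∑ j, A i j * Real.cos (t i - t j) := by
  set x : ι → ℝ := fun i => Real.cos (t i)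
  set y : ι → ℝ := fun i => Real.sin (t i)
  have hsum : ∑ i, ∑ j, A i j * Real.cos (t i - t j) = x ⬝ᵥ (A *ᵥ x) + y ⬝ᵥ (A *ᵥ y) := by
    simp only [x, y, dotProduct, mulVec, Finset.mul_sum, ← Finset.sum_add_distrib, Real.cos_sub]
    exact Finset.sum_congr rfl fun i _ => Finset.sum_congr rfl fun j _ => by ring
  have hxy : x ≠ 0 ∨ y ≠ 0 := by
    obtain ⟨i⟩ := ‹Nonempty ι›
    by_contra! h
    simpa [x, y, congrFun h.1 i, congrFun h.2 i] using Real.sin_sq_add_cos_sq (t i)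
  have hpos (v : ι → ℝ) (hv : v ≠ 0) : 0 < v ⬝ᵥ (A *ᵥ v) := by
    simpa using hA.dotProduct_mulVec_pos hv
  have hnonneg (v : ι → ℝ) : 0 ≤ v ⬝ᵥ (A *ᵥ v) := by
    simpa using hA.posSemidef.dotProduct_mulVec_nonneg v
  rw [hsum]
  rcases hxy with hx | hy
  · linarith [hpos x hx, hnonneg y]
  · linarith [hnonneg x, hpos y hy]

theorem Complex.re_pos_on_closure_of_re_pos_on_frontier {E : Type*} [NormedAddCommGroup E]
    [NormedSpace ℂ E] [Nontrivial E] [FiniteDimensional ℂ E] {U : Set E} {f : E → ℂ}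
    (hU : Bornology.IsBounded U) (hf : DiffContOnCl ℂ f U)
    (hpos : ∀ z ∈ frontier U, 0 < (f z).re) : ∀ z ∈ closure U, 0 < (f z).re := by
  intro z hz
  -- `‖exp (-f)‖ = exp (-re f)`: the maximum modulus principle for `exp (-f)` is a minimum
  -- principle for `re f`
  have hexp : DiffContOnCl ℂ (fun w => exp (-f w)) U :=
    ⟨hf.differentiableOn.neg.cexp, hf.continuousOn.neg.cexp⟩
  obtain ⟨w, hw, hmax⟩ := exists_mem_frontier_isMaxOn_norm hU
    (closure_nonempty_iff.mp ⟨z, hz⟩) hexp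
  have hle : Real.exp (-(f z).re) ≤ Real.exp (-(f w).re) := by
    simpa [norm_exp] using hmax hz
  linarith [Real.exp_le_exp.mp hle, hpos w hw]

section Cubic

variable (d₀ d₁ d₂ : ℝ)

noncomputable abbrev lmiMatrix : Matrix (Fin 4) (Fin 4) ℝ :=
  !![(2 : ℝ), (4/3) * d₂, 2 * d₁, 4 * d₀;
     (4/3) * d₂, 2, (4/3) * d₂, 2 * d₁;
     2 * d₁, (4/3) * d₂, 2, (4/3) * d₂;
     4 * d₀, 2 * d₁, (4/3) * d₂, 2]

lemma sum_lmiMatrix_mul_cos_sub (θ : ℝ) :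
    ∑ i : Fin 4, ∑ j : Fin 4, lmiMatrix d₀ d₁ d₂ i j * Real.cos (i * θ - j * θ)
      = 8 * (1 + d₂ * Real.cos θ + d₁ * Real.cos (2 * θ) + d₀ * Real.cos (3 * θ)) := by
  simp only [of_apply, cons_val', cons_val_fin_one, Fin.sum_univ_four, Fin.isValue, cons_val_zero,
    Fin.coe_ofNat_eq_mod, Nat.zero_mod, CharP.cast_eq_zero, zero_mul, sub_zero, cons_val_one,
    Nat.one_mod, Nat.cast_one, one_mul, cons_val, Nat.reduceMod, Nat.cast_ofNat, Nat.mod_succ,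
    Real.cos_zero, mul_one, zero_sub, Real.cos_neg, sub_self]
  ring_nf
  simp only [Real.cos_neg]
  ring

lemma re_reversedCubic_exp_mul_I (θ : ℝ) :
    (1 + d₂ * exp (θ * I) + d₁ * exp (θ * I) ^ 2 + d₀ * exp (θ * I) ^ 3).re
      = 1 + d₂ * Real.cos θ + d₁ * Real.cos (2 * θ) + d₀ * Real.cos (3 * θ) := by
  have hpow (n : ℕ) : exp (θ * I) ^ n = exp ((n * θ : ℝ) * I) := by
    rw [← exp_nat_mul]
    push_cast
    ring_nf
  simp only [hpow, add_re, re_ofReal_mul, exp_ofReal_mul_I_re, one_re]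
  push_cast
  ring_nf

variable {d₀ d₁ d₂}

lemma reversedCubic_ne_zero_of_norm_le_one (hPD : (lmiMatrix d₀ d₁ d₂).PosDef) {w : ℂ}
    (hw : ‖w‖ ≤ 1) : 1 + d₂ * w + d₁ * w ^ 2 + d₀ * w ^ 3 ≠ 0 := by
  have hcircle (θ : ℝ) :
      0 < (1 + d₂ * exp (θ * I) + d₁ * exp (θ * I) ^ 2 + d₀ * exp (θ * I) ^ 3).re := by
    have := hPD.sum_mul_cos_sub_pos (fun i => i * θ)
    rw [sum_lmiMatrix_mul_cos_sub] at this
    rw [re_reversedCubic_exp_mul_I]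
    linarith
  have hfrontier : ∀ z ∈ frontier (Metric.ball (0 : ℂ) 1),
      0 < (1 + d₂ * z + d₁ * z ^ 2 + d₀ * z ^ 3).re := by
    intro z hz
    rw [frontier_ball (0 : ℂ) one_ne_zero, mem_sphere_zero_iff_norm] at hz
    have hz' : exp (arg z * I) = z := by simpa [hz] using norm_mul_exp_arg_mul_I z
    simpa [hz'] using hcircle (arg z)
  have hdisk := re_pos_on_closure_of_re_pos_on_frontier Metric.isBounded_ball
    (Differentiable.diffContOnCl (by fun_prop)) hfrontier
  intro h
  simpa [h] using hdisk w (by simpa [closure_ball (0 : ℂ) one_ne_zero] using hw)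

end Cubic

/-- If the 4×4 LMI matrix (central polynomial `c(z) = z³`) is positive definite, then
`d(z) = d₀ + d₁z + d₂z² + z³` is Schur stable. -/
theorem stmt17 (d₀ d₁ d₂ : ℝ)
    (hPD : (!![(2 : ℝ), (4/3) * d₂, 2 * d₁, 4 * d₀;
               (4/3) * d₂, 2, (4/3) * d₂, 2 * d₁;
               2 * d₁, (4/3) * d₂, 2, (4/3) * d₂;
               4 * d₀, 2 * d₁, (4/3) * d₂, 2]).PosDef) :
    ∀ z : ℂ, z ^ 3 + (d₂ : ℂ) * z ^ 2 + (d₁ : ℂ) * z + (d₀ : ℂ) = 0 → ‖z‖ < 1 := by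
  intro z hz
  by_contra! hge
  have hz0 : z ≠ 0 := norm_pos_iff.mp (by linarith)
  apply reversedCubic_ne_zero_of_norm_le_one (w := z⁻¹) hPD
  · simpa using inv_le_one_of_one_le₀ hge
  · field_simp
    linear_combination hz
end
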